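/- Let T^{P^B∩C} := T + recc(P^B ∩ C) (the interval parameters λ⁻_j, λ⁺_j defining T are unchanged when C is replaced by P^B ∩ C, since each halfline {x̄ + λ r^j : λ ≥ 0} lies in P^B). Then cl(conv(P^B ∖ C)) = cl(conv(P^B ∖ T^{P^B∩C})). -/

import Mathlib

open Set Pointwise

noncomputable section

variable {n : ℕ} {ι : Type*} [Fintype ι]

/-- Recession cone of a set `A`. -/
def recc (A : Set (Fin n → ℝ)) : Set (Fin n → ℝ) :=
  {d | ∀ a ∈ A, ∀ t : ℝ, 0 ≤ t → a + t • d ∈ A}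

/-- The translated simplicial cone `P^B = {x̄ + Σ_j x_j r^j : x_j ≥ 0}`. -/
def PBset (xb : Fin n → ℝ) (r : ι → Fin n → ℝ) : Set (Fin n → ℝ) :=
  {x | ∃ c : ι → ℝ, (∀ j, 0 ≤ c j) ∧ x = xb + ∑ j, c j • r j}

/-- The recession cone of `P^B`, i.e. `{Σ_j t_j r^j : t_j ≥ 0}`. -/
def reccPBset (r : ι → Fin n → ℝ) : Set (Fin n → ℝ) :=
  {x | ∃ t : ι → ℝ, (∀ j, 0 ≤ t j) ∧ x = ∑ j, t j • r j}

/-- `λ⁻ = inf {λ ≥ 0 : x̄ + λ d ∈ C}` (`+∞` if the halfline misses `C`). -/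
noncomputable def lamM (xb d : Fin n → ℝ) (C : Set (Fin n → ℝ)) : EReal :=
  sInf ((fun l : ℝ => (l : EReal)) '' {l : ℝ | 0 ≤ l ∧ xb + l • d ∈ C})

/-- `λ⁺ = sup {λ ≥ 0 : x̄ + λ d ∈ C}` (`−∞` if the halfline misses `C`). -/
noncomputable def lamP (xb d : Fin n → ℝ) (C : Set (Fin n → ℝ)) : EReal :=
  sSup ((fun l : ℝ => (l : EReal)) '' {l : ℝ | 0 ≤ l ∧ xb + l • d ∈ C})

/-- `N₀`: indices whose halfline misses `C`. -/
def N0set (xb : Fin n → ℝ) (r : ι → Fin n → ℝ) (C : Set (Fin n → ℝ)) : Set ι :=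
  {j | ∀ l : ℝ, 0 ≤ l → xb + l • r j ∉ C}

/-- `N₁`: indices with `0 < λ⁻ < +∞` and `λ⁺ = +∞`. -/
def N1set (xb : Fin n → ℝ) (r : ι → Fin n → ℝ) (C : Set (Fin n → ℝ)) : Set ι :=
  {j | 0 < lamM xb (r j) C ∧ lamM xb (r j) C < ⊤ ∧ lamP xb (r j) C = ⊤}

/-- `N₂`: indices with `0 < λ⁻ < +∞` and `λ⁻ < λ⁺ < +∞`. -/
def N2set (xb : Fin n → ℝ) (r : ι → Fin n → ℝ) (C : Set (Fin n → ℝ)) : Set ι :=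
  {j | 0 < lamM xb (r j) C ∧ lamM xb (r j) C < ⊤ ∧
    lamM xb (r j) C < lamP xb (r j) C ∧ lamP xb (r j) C < ⊤}

/-- `T = {x̄} + conv(⋃_{j∈N₁∪N₂} {λ r^j : λ⁻_j < λ < λ⁺_j})`. -/
def Tset (xb : Fin n → ℝ) (r : ι → Fin n → ℝ) (C : Set (Fin n → ℝ)) : Set (Fin n → ℝ) :=
  {xb} + convexHull ℝ (⋃ j ∈ N1set xb r C ∪ N2set xb r C,
    {y : Fin n → ℝ | ∃ l : ℝ, lamM xb (r j) C < (l : EReal) ∧ (l : EReal) < lamP xb (r j) C ∧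
      y = l • r j})

/-- `T^C = T + recc(C)`. -/
def TCset (xb : Fin n → ℝ) (r : ι → Fin n → ℝ) (C : Set (Fin n → ℝ)) : Set (Fin n → ℝ) :=
  Tset xb r C + recc C

/-- `R = {x̄} + conv(⋃_{j∈N₁} {λ r^j : λ > λ⁻_j})`. -/
def Rset (xb : Fin n → ℝ) (r : ι → Fin n → ℝ) (C : Set (Fin n → ℝ)) : Set (Fin n → ℝ) :=
  {xb} + convexHull ℝ (⋃ j ∈ N1set xb r C,
    {y : Fin n → ℝ | ∃ l : ℝ, lamM xb (r j) C < (l : EReal) ∧ y = l • r j})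

/-- `R^C = R + recc(C)`. -/
def RCset (xb : Fin n → ℝ) (r : ι → Fin n → ℝ) (C : Set (Fin n → ℝ)) : Set (Fin n → ℝ) :=
  Rset xb r C + recc C


/-!
Suppose `x ∈ P^B` is separated from `cl conv(P^B ∖ C)` by a functional, `ψ x < β ≤ ψ` on
`P^B ∖ C`. Then `{y ∈ P^B | ψ y < β} ⊆ C`, so every direction `d` of `P^B` with `ψ d ≤ 0` is a
recession direction of `P^B ∩ C` (for an open convex set, one ray inside it suffices), and every
ray `r^j` with `ψ r^j < 0` eventually stays in `C`, i.e. `j ∈ N₁`. Write `x = x̄ + v` and let `w`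
be the part of `v` along the rays with `ψ r^j < 0`; then `ρ = ψ v / ψ w ∈ (0, 1]`. The point
`x̄ + ρ w` is a convex combination of the points `x̄ + (ψ v / ψ r^j) r^j`, which lie on the level of
`x`, hence past `λ⁻_j`, so it is in `T`; and `v - ρ w` has `ψ = 0`, so it is in `recc(P^B ∩ C)`.
-/

section OpenConvex

variable {E : Type*} [AddCommGroup E] [Module ℝ E] [TopologicalSpace E]
  [IsTopologicalAddGroup E] [ContinuousSMul ℝ E]

lemma IsOpen.exists_pos_add_smul_mem {C : Set E} (hC : IsOpen C) {a : E} (ha : a ∈ C) (v : E) :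
    ∃ ε : ℝ, 0 < ε ∧ a + ε • v ∈ C := by
  have hcont : Continuous fun ε : ℝ => a + ε • v := by fun_prop
  have hev : ∀ᶠ ε in nhdsWithin (0 : ℝ) (Ioi 0), a + ε • v ∈ C :=
    nhdsWithin_le_nhds (hcont.tendsto' 0 a (by simp) (hC.mem_nhds ha))
  obtain ⟨ε, hεC, hε⟩ := (hev.and self_mem_nhdsWithin).exists
  exact ⟨ε, hε, hεC⟩

lemma Convex.add_smul_mem_of_forall_add_smul_mem {C : Set E} (hCconv : Convex ℝ C)
    (hCopen : IsOpen C) {x d : E} (hray : ∀ s : ℝ, 0 ≤ s → x + s • d ∈ C) {a : E}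
    (ha : a ∈ C) {t : ℝ} (ht : 0 ≤ t) : a + t • d ∈ C := by
  obtain ⟨ε, hε, ha'⟩ := hCopen.exists_pos_add_smul_mem ha (a - x)
  have hcomb : a + t • d = (1 + ε)⁻¹ • (a + ε • (a - x))
      + (ε / (1 + ε)) • (x + ((1 + ε) * t / ε) • d) := by
    match_scalars <;> field_simp
    ring
  rw [hcomb]
  exact hCconv ha' (hray _ (by positivity)) (by positivity) (by positivity) (by field_simp)

end OpenConvex

section SimplicialCone

variable {xb : Fin n → ℝ} {r : ι → Fin n → ℝ}

lemma self_mem_PBset : xb ∈ PBset xb r := ⟨0, fun _ => le_rfl, by simp⟩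

lemma convex_PBset : Convex ℝ (PBset xb r) := by
  rintro _ ⟨c, hc, rfl⟩ _ ⟨c', hc', rfl⟩ a b ha hb hab
  refine ⟨a • c + b • c', fun j => add_nonneg (mul_nonneg ha (hc j)) (mul_nonneg hb (hc' j)), ?_⟩
  obtain rfl : b = 1 - a := by linarith
  simp only [Pi.add_apply, Pi.smul_apply, smul_eq_mul, add_smul, mul_smul, Finset.sum_add_distrib,
    ← Finset.smul_sum]
  module

lemma sum_smul_mem_recc_PBset {e : ι → ℝ} (he : ∀ j, 0 ≤ e j) :
    ∑ j, e j • r j ∈ recc (PBset xb r) := by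
  rintro _ ⟨c, hc, rfl⟩ t ht
  refine ⟨c + t • e, fun j => add_nonneg (hc j) (mul_nonneg ht (he j)), ?_⟩
  simp only [Pi.add_apply, Pi.smul_apply, smul_eq_mul, add_smul, mul_smul, Finset.sum_add_distrib,
    ← Finset.smul_sum, add_assoc]

lemma mem_recc_PBset (j : ι) : r j ∈ recc (PBset xb r) := by
  classical
  simpa using sum_smul_mem_recc_PBset (xb := xb) (r := r) (e := Pi.single j 1)
    (fun i => by by_cases h : i = j <;> simp [h])

end SimplicialCone

section Halfline

variable {xb d : Fin n → ℝ} {C : Set (Fin n → ℝ)}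

lemma lamM_pos (hxb : xb ∉ closure C) : 0 < lamM xb d C := by
  have hcont : Continuous fun l : ℝ => xb + l • d := by fun_prop
  have hnhds : (fun l : ℝ => xb + l • d) ⁻¹' (closure C)ᶜ ∈ nhds (0 : ℝ) :=
    hcont.continuousAt.preimage_mem_nhds
      (isClosed_closure.isOpen_compl.mem_nhds (by simpa using hxb))
  obtain ⟨δ, hδ, hball⟩ := Metric.mem_nhds_iff.mp hnhds
  have hle : (δ : EReal) ≤ lamM xb d C := by
    refine le_sInf ?_
    rintro _ ⟨l, ⟨hl0, hlC⟩, rfl⟩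
    refine EReal.coe_le_coe_iff.mpr (not_lt.mp fun hlδ => hball ?_ (subset_closure hlC))
    simpa [Real.dist_eq, abs_of_nonneg hl0] using hlδ
  exact lt_of_lt_of_le (EReal.coe_pos.mpr hδ) hle

lemma lamM_lt_of_forall_lt_mem {m l : ℝ} (hm : 0 ≤ m) (h : ∀ l, m < l → xb + l • d ∈ C)
    (hl : m < l) : lamM xb d C < l := by
  have hmid : m < (m + l) / 2 := by linarith
  calc lamM xb d C ≤ (((m + l) / 2 : ℝ) : EReal) := sInf_le ⟨_, ⟨by linarith, h _ hmid⟩, rfl⟩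
    _ < l := EReal.coe_lt_coe_iff.mpr (by linarith)

lemma lamP_eq_top_of_forall_lt_mem {m : ℝ} (hm : 0 ≤ m) (h : ∀ l, m < l → xb + l • d ∈ C) :
    lamP xb d C = ⊤ := by
  have hmem : ∀ l : ℝ, m < l → (l : EReal) ∈
      (fun l : ℝ => (l : EReal)) '' {l : ℝ | 0 ≤ l ∧ xb + l • d ∈ C} :=
    fun l hl => ⟨l, ⟨by linarith, h l hl⟩, rfl⟩
  refine sSup_eq_top.mpr fun b hb => ?_
  induction b using EReal.rec with
  | bot => exact ⟨_, hmem (m + 1) (by linarith), EReal.bot_lt_coe _⟩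
  | coe b =>
    exact ⟨_, hmem (max b m + 1) (by linarith [le_max_right b m]),
      EReal.coe_lt_coe_iff.mpr (by linarith [le_max_left b m])⟩
  | top => exact absurd hb (lt_irrefl _)

lemma mem_of_lamM_lt_of_lt_lamP (hCconv : Convex ℝ C) {l : ℝ} (h₁ : lamM xb d C < l)
    (h₂ : (l : EReal) < lamP xb d C) : 0 ≤ l ∧ xb + l • d ∈ C := by
  obtain ⟨_, ⟨l₁, hl₁, rfl⟩, hl₁l⟩ := sInf_lt_iff.mp h₁
  obtain ⟨_, ⟨l₂, hl₂, rfl⟩, hll₂⟩ := lt_sSup_iff.mp h₂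
  have hconv : Convex ℝ {l : ℝ | 0 ≤ l ∧ xb + l • d ∈ C} :=
    (convex_Ici 0).inter
      ((hCconv.translate_preimage_right xb).linear_preimage (LinearMap.toSpanSingleton ℝ _ d))
  exact (convex_iff_ordConnected.mp hconv).out hl₁ hl₂
    ⟨(EReal.coe_lt_coe_iff.mp hl₁l).le, (EReal.coe_lt_coe_iff.mp hll₂).le⟩

end Halfline

section Separation

variable {xb : Fin n → ℝ} {r : ι → Fin n → ℝ} {C : Set (Fin n → ℝ)}
  {ψ : (Fin n → ℝ) →L[ℝ] ℝ} {β : ℝ}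

lemma Tset_subset_PBset_inter (hCconv : Convex ℝ C) : Tset xb r C ⊆ PBset xb r ∩ C := by
  rintro _ ⟨x, hx, y, hy, rfl⟩
  rw [mem_singleton_iff.mp hx]
  refine convexHull_min ?_ ((convex_PBset.inter hCconv).translate_preimage_right xb) hy
  simp only [Set.iUnion_subset_iff]
  rintro j - _ ⟨l, hl₁, hl₂, rfl⟩
  obtain ⟨hl0, hlC⟩ := mem_of_lamM_lt_of_lt_lamP hCconv hl₁ hl₂
  exact ⟨mem_recc_PBset j xb self_mem_PBset l hl0, hlC⟩

lemma Tset_add_recc_subset (hCconv : Convex ℝ C) :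
    Tset xb r C + recc (PBset xb r ∩ C) ⊆ C := by
  rintro _ ⟨t, ht, k, hk, rfl⟩
  simpa using (hk t (Tset_subset_PBset_inter hCconv ht) 1 zero_le_one).2

lemma mem_of_mem_PBset_of_lt (hval : ∀ y ∈ PBset xb r \ C, β ≤ ψ y) {y : Fin n → ℝ}
    (hy : y ∈ PBset xb r) (hψy : ψ y < β) : y ∈ C :=
  of_not_not fun hyC => absurd (hval y ⟨hy, hyC⟩) (not_le.mpr hψy)

lemma mem_recc_inter_of_map_nonpos (hCopen : IsOpen C) (hCconv : Convex ℝ C)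
    (hval : ∀ y ∈ PBset xb r \ C, β ≤ ψ y) {x : Fin n → ℝ} (hx : x ∈ PBset xb r)
    (hψx : ψ x < β) {d : Fin n → ℝ} (hd : d ∈ recc (PBset xb r)) (hψd : ψ d ≤ 0) :
    d ∈ recc (PBset xb r ∩ C) := by
  refine fun a ha t ht => ⟨hd a ha.1 t ht,
    hCconv.add_smul_mem_of_forall_add_smul_mem hCopen (x := x) (fun s hs => ?_) ha.2 ht⟩
  refine mem_of_mem_PBset_of_lt hval (hd x hx s hs) ?_
  calc ψ (x + s • d) = ψ x + s * ψ d := by simp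
    _ ≤ ψ x := add_le_of_nonpos_right (mul_nonpos_of_nonneg_of_nonpos hs hψd)
    _ < β := hψx

lemma mem_N1set_of_map_neg (hxb : xb ∉ closure C) (hval : ∀ y ∈ PBset xb r \ C, β ≤ ψ y)
    {j : ι} (hψj : ψ (r j) < 0) {l : ℝ} (hl : ψ (xb + l • r j) < β) :
    j ∈ N1set xb r C ∧ lamM xb (r j) C < l := by
  have hψxb : β ≤ ψ xb := hval xb ⟨self_mem_PBset, fun h => hxb (subset_closure h)⟩
  have hlevel : ∀ l', (β - ψ xb) / ψ (r j) < l' ↔ ψ (xb + l' • r j) < β := fun l' => by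
    rw [div_lt_iff_of_neg hψj]
    simp only [map_add, map_smul, smul_eq_mul]
    constructor <;> intro h <;> linarith
  have hm : 0 ≤ (β - ψ xb) / ψ (r j) := div_nonneg_of_nonpos (by linarith) hψj.le
  have hC : ∀ l', (β - ψ xb) / ψ (r j) < l' → xb + l' • r j ∈ C := fun l' hl' =>
    mem_of_mem_PBset_of_lt hval (mem_recc_PBset j xb self_mem_PBset l' (by linarith))
      ((hlevel l').mp hl')
  have hlamM := lamM_lt_of_forall_lt_mem hm hC ((hlevel l).mpr hl)
  exact ⟨⟨lamM_pos hxb, hlamM.trans (EReal.coe_lt_top l), lamP_eq_top_of_forall_lt_mem hm hC⟩,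
    hlamM⟩

lemma add_smul_sum_mem_Tset (hxb : xb ∉ closure C) (hval : ∀ y ∈ PBset xb r \ C, β ≤ ψ y)
    {J : Finset ι} (hJ : ∀ j ∈ J, ψ (r j) < 0) {c : ι → ℝ} (hc : ∀ j, 0 ≤ c j)
    (hw : ψ (∑ j ∈ J, c j • r j) < 0) {L : ℝ} (hL : ψ xb + L < β) :
    xb + (L / ψ (∑ j ∈ J, c j • r j)) • ∑ j ∈ J, c j • r j ∈ Tset xb r C := by
  set w := ∑ j ∈ J, c j • r j with hw_def
  refine Set.add_mem_add rfl ?_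
  -- a convex combination of the points `(L / ψ r^j) • r^j`, all on the level `ψ = L`
  have hcomb : (L / ψ w) • w = ∑ j ∈ J, (c j * ψ (r j) / ψ w) • ((L / ψ (r j)) • r j) := by
    rw [hw_def, Finset.smul_sum]
    refine Finset.sum_congr rfl fun j hj => ?_
    have := (hJ j hj).ne
    rw [smul_smul, smul_smul]
    congr 1
    field_simp
  rw [hcomb]
  refine (convex_convexHull ℝ _).sum_mem (fun j hj => ?_) ?_
    (fun j hj => subset_convexHull ℝ _ ?_)
  · exact div_nonneg_of_nonpos (mul_nonpos_of_nonneg_of_nonpos (hc j) (hJ j hj).le) hw.le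
  · rw [← Finset.sum_div, div_eq_one_iff_eq hw.ne]
    simp [hw_def, map_sum]
  · have hl : ψ (xb + (L / ψ (r j)) • r j) < β := by
      simpa [div_mul_cancel₀ _ (hJ j hj).ne] using hL
    obtain ⟨hjN1, hlam⟩ := mem_N1set_of_map_neg hxb hval (hJ j hj) hl
    exact mem_iUnion₂.mpr ⟨j, Or.inl hjN1, _, hlam,
      by rw [hjN1.2.2]; exact EReal.coe_lt_top _, rfl⟩

theorem mem_Tset_add_recc_of_map_lt (hCopen : IsOpen C) (hCconv : Convex ℝ C)
    (hxb : xb ∉ closure C) (hval : ∀ y ∈ PBset xb r \ C, β ≤ ψ y) {x : Fin n → ℝ}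
    (hx : x ∈ PBset xb r) (hψx : ψ x < β) : x ∈ Tset xb r C + recc (PBset xb r ∩ C) := by
  obtain ⟨c, hc, rfl⟩ := hx
  have hψxb : β ≤ ψ xb := hval xb ⟨self_mem_PBset, fun h => hxb (subset_closure h)⟩
  set J := Finset.univ.filter fun j => ψ (r j) < 0
  set v := ∑ j, c j • r j with hv
  set w := ∑ j ∈ J, c j • r j with hw
  have hψv : ψ v < 0 := by simp only [map_add] at hψx; linarith
  have hψwv : ψ w ≤ ψ v := by
    rw [hv, ← Finset.sum_filter_add_sum_filter_not Finset.univ (fun j => ψ (r j) < 0)]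
    simp only [map_add, map_sum, map_smul, smul_eq_mul, hw]
    refine le_add_of_nonneg_right (Finset.sum_nonneg fun j hj => ?_)
    exact mul_nonneg (hc j) (not_lt.mp (Finset.mem_filter.mp hj).2)
  have hψw : ψ w < 0 := hψwv.trans_lt hψv
  set ρ := ψ v / ψ w with hρ
  have hρ1 : ρ ≤ 1 := (div_le_one_of_neg hψw).mpr hψwv
  set k := ∑ j, (if ψ (r j) < 0 then (1 - ρ) * c j else c j) • r j with hk
  have hvk : v = ρ • w + k := by
    rw [hv, hw, hk, Finset.sum_filter, Finset.smul_sum, ← Finset.sum_add_distrib]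
    refine Finset.sum_congr rfl fun j _ => ?_
    split_ifs <;> module
  have hT : xb + ρ • w ∈ Tset xb r C :=
    add_smul_sum_mem_Tset hxb hval (fun j hj => (Finset.mem_filter.mp hj).2) hc hψw
      (by simpa only [map_add] using hψx)
  have hK : k ∈ recc (PBset xb r ∩ C) := by
    refine mem_recc_inter_of_map_nonpos hCopen hCconv hval ⟨c, hc, rfl⟩ hψx
      (sum_smul_mem_recc_PBset fun j => ?_) ?_
    · have := hc j
      split_ifs <;> nlinarith
    · have := congrArg ψ hvk
      simp only [map_add, map_smul, smul_eq_mul, hρ, div_mul_cancel₀ _ hψw.ne] at this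
      linarith
  rw [hvk, ← add_assoc]
  exact Set.add_mem_add hT hK

end Separation

theorem stmt3_general (xb : Fin n → ℝ) (r : ι → Fin n → ℝ)
    (C : Set (Fin n → ℝ)) (hCopen : IsOpen C) (hCconv : Convex ℝ C)
    (hxb : xb ∉ closure C) :
    closure (convexHull ℝ (PBset xb r \ C))
      = closure (convexHull ℝ (PBset xb r \ (Tset xb r C + recc (PBset xb r ∩ C)))) := by
  refine (closure_mono (convexHull_mono
    (sdiff_subset_sdiff_right (Tset_add_recc_subset hCconv)))).antisymm ?_
  refine closure_minimal (convexHull_min ?_ (convex_convexHull ℝ _).closure) isClosed_closure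
  rintro x ⟨hxP, hxA⟩
  by_contra hx
  obtain ⟨ψ, β, hψx, hψ⟩ :=
    geometric_hahn_banach_point_closed (convex_convexHull ℝ _).closure isClosed_closure hx
  exact hxA (mem_Tset_add_recc_of_map_lt hCopen hCconv hxb
    (fun y hy => (hψ y (subset_closure (subset_convexHull ℝ _ hy))).le) hxP hψx)

/-- Corollary 1. With `T^{P^B∩C} := T + recc(P^B ∩ C)` (the interval
parameters `λ⁻, λ⁺` defining `T` are taken with respect to the original `C`),
`cl conv(P^B ∖ C) = cl conv(P^B ∖ T^{P^B∩C})`. -/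
theorem stmt3 (xb : Fin n → ℝ) (r : ι → Fin n → ℝ) (hr : LinearIndependent ℝ r)
    (C : Set (Fin n → ℝ)) (hCopen : IsOpen C) (hCconv : Convex ℝ C)
    (hxb : xb ∉ closure C) :
    closure (convexHull ℝ (PBset xb r \ C))
      = closure (convexHull ℝ (PBset xb r \ (Tset xb r C + recc (PBset xb r ∩ C)))) :=
  stmt3_general xb r C hCopen hCconv hxb
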